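/- arXiv:1902.00216 — 4 statements merged into one kernel-verified Lean document; each statement's English description precedes it below -/
import Mathlib

section
/- Let w1 and w2 be p-strings of the same length. Then w1 and w2 are a parameterized match (w1 ≈ w2) if and only if their prev-encodings are equal, i.e., ⟨w1⟩ = ⟨w2⟩. -/
open List

variable {σ π : Type*}

/-- The prev-encoding symbol of `w` at (0-indexed) position `i`:
constants are kept; a parameter is encoded by the distance to its
previous occurrence, or `0` if it has no previous occurrence. -/
def prevAt [DecidableEq σ] [DecidableEq π] (w : List (σ ⊕ π)) (i : ℕ) : σ ⊕ ℕ :=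
  match w[i]? with
  | some (Sum.inl a) => Sum.inl a
  | some (Sum.inr x) =>
      let s := (Finset.range i).filter (fun j => w[j]? = some (Sum.inr x))
      if h : s.Nonempty then Sum.inr (i - s.max' h) else Sum.inr 0
  | none => Sum.inr 0

/-- The prev-encoding `⟨w⟩` of a p-string `w`. -/
def prevEncode [DecidableEq σ] [DecidableEq π] (w : List (σ ⊕ π)) : List (σ ⊕ ℕ) :=
  (List.range w.length).map (prevAt w)

/-- The `k`-re-encoding `⟨u⟩ₖ` of a pv-string `u`: a numeric symbol `u[i]`
(1-indexed) is replaced by `0` whenever `u[i] ≥ i - k + 1`. -/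
def reEncode (k : ℕ) (u : List (σ ⊕ ℕ)) : List (σ ⊕ ℕ) :=
  (List.range u.length).map (fun i =>
    match u[i]? with
    | some (Sum.inl a) => Sum.inl a
    | some (Sum.inr m) => if i + 2 ≤ m + k then Sum.inr (0 : ℕ) else Sum.inr m
    | none => Sum.inr 0)

/-- The implicit suffix link `sl(u) = ⟨u[2:]⟩₁`. -/
def sl (u : List (σ ⊕ ℕ)) : List (σ ⊕ ℕ) := reEncode 1 u.tail

/-- The set of prev-encoded substrings of `T`. -/
def PrevSub [DecidableEq σ] [DecidableEq π] (T : List (σ ⊕ π)) : Set (List (σ ⊕ ℕ)) :=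
  { u | ∃ w, w <:+: T ∧ u = prevEncode w }

/-- `w₁` and `w₂` are a parameterized match: some bijection on the alphabet
`Σ ∪ Π` that fixes every constant symbol sends `w₁` to `w₂`. -/
def PMatch (w₁ w₂ : List (σ ⊕ π)) : Prop :=
  ∃ f : σ ⊕ π → σ ⊕ π, Function.Bijective f ∧ (∀ a : σ, f (Sum.inl a) = Sum.inl a) ∧
    w₂ = w₁.map f

section Aux
variable [DecidableEq σ] [DecidableEq π]

lemma pm_prevEncode_get (w : List (σ ⊕ π)) {i : ℕ} (hi : i < w.length) :
    (prevEncode w)[i]? = some (prevAt w i) := by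
  simp [prevEncode, List.getElem?_map, List.getElem?_range hi]

lemma pm_prevAt_congr {w₁ w₂ : List (σ ⊕ π)} (h : prevEncode w₁ = prevEncode w₂)
    {i : ℕ} (hi : i < w₁.length) : prevAt w₁ i = prevAt w₂ i := by
  have hlen : w₁.length = w₂.length := by
    have := congrArg List.length h; simpa [prevEncode] using this
  have h1 := pm_prevEncode_get w₁ hi
  have h2 := pm_prevEncode_get w₂ (hlen ▸ hi)
  rw [h] at h1; rw [h1] at h2; exact Option.some_inj.1 h2

lemma pm_prevAt_inl {w : List (σ ⊕ π)} {i : ℕ} {a : σ} (h : w[i]? = some (Sum.inl a)) :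
    prevAt w i = Sum.inl a := by simp [prevAt, h]

lemma pm_prevAt_inr {w : List (σ ⊕ π)} {i : ℕ} {x : π} (h : w[i]? = some (Sum.inr x)) :
    prevAt w i =
      (if hs : ((Finset.range i).filter (fun j => w[j]? = some (Sum.inr x))).Nonempty
        then Sum.inr (i - ((Finset.range i).filter (fun j => w[j]? = some (Sum.inr x))).max' hs)
        else Sum.inr 0) := by
  simp [prevAt, h]

lemma pm_const_pos {w₁ w₂ : List (σ ⊕ π)} (hlen : w₁.length = w₂.length)
    (h : prevEncode w₁ = prevEncode w₂) {i : ℕ} (hi : i < w₁.length) {a : σ}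
    (hx : w₁[i]? = some (Sum.inl a)) : w₂[i]? = some (Sum.inl a) := by
  have hp : prevAt w₂ i = Sum.inl a := (pm_prevAt_congr h hi) ▸ pm_prevAt_inl hx
  have hi₂ : i < w₂.length := hlen ▸ hi
  cases hc : w₂[i]'hi₂ with
  | inl b =>
    have hb : w₂[i]? = some (Sum.inl b) := by rw [List.getElem?_eq_getElem hi₂, hc]
    rw [pm_prevAt_inl hb] at hp
    simp only [Sum.inl.injEq] at hp
    rw [hb, hp]
  | inr y =>
    have hb : w₂[i]? = some (Sum.inr y) := by rw [List.getElem?_eq_getElem hi₂, hc]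
    rw [pm_prevAt_inr hb] at hp
    split at hp <;> simp at hp

lemma pm_param_pos {w₁ w₂ : List (σ ⊕ π)} (hlen : w₁.length = w₂.length)
    (h : prevEncode w₁ = prevEncode w₂) {i : ℕ} (hi : i < w₁.length) {x : π}
    (hx : w₁[i]? = some (Sum.inr x)) : ∃ y, w₂[i]? = some (Sum.inr y) := by
  have hi₂ : i < w₂.length := hlen ▸ hi
  cases hc : w₂[i]'hi₂ with
  | inl b =>
    exfalso
    have hb : w₂[i]? = some (Sum.inl b) := by rw [List.getElem?_eq_getElem hi₂, hc]
    have hp := pm_prevAt_congr h hi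
    rw [pm_prevAt_inl hb, pm_prevAt_inr hx] at hp
    split at hp <;> simp at hp
  | inr y => exact ⟨y, by rw [List.getElem?_eq_getElem hi₂, hc]⟩

lemma pm_claimC {w₁ w₂ : List (σ ⊕ π)} (hlen : w₁.length = w₂.length)
    (h : prevEncode w₁ = prevEncode w₂) :
    ∀ i, i < w₁.length → ∀ j, j ≤ i → (w₁[j]? = w₁[i]? ↔ w₂[j]? = w₂[i]?) := by
  intro i
  induction i using Nat.strong_induction_on with
  | _ i IH =>
  intro hi j hj
  have hj1 : j < w₁.length := lt_of_le_of_lt hj hi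
  rcases eq_or_lt_of_le hj with rfl | hji
  · simp
  cases hc₁ : w₁[i]'hi with
  | inl a =>
    have hc₁' : w₁[i]? = some (Sum.inl a) := by rw [List.getElem?_eq_getElem hi, hc₁]
    have hc₂' : w₂[i]? = some (Sum.inl a) := pm_const_pos hlen h hi hc₁'
    rw [hc₁', hc₂']
    constructor
    · intro hj'; exact pm_const_pos hlen h hj1 hj'
    · intro hj'; exact pm_const_pos hlen.symm h.symm (hlen ▸ hj1) hj'
  | inr x =>
    have hc₁' : w₁[i]? = some (Sum.inr x) := by rw [List.getElem?_eq_getElem hi, hc₁]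
    obtain ⟨y, hc₂'⟩ := pm_param_pos hlen h hi hc₁'
    have hpp : prevAt w₁ i = prevAt w₂ i := pm_prevAt_congr h hi
    rw [pm_prevAt_inr hc₁', pm_prevAt_inr hc₂'] at hpp
    set s₁ := (Finset.range i).filter (fun j => w₁[j]? = some (Sum.inr x)) with hs₁def
    set s₂ := (Finset.range i).filter (fun j => w₂[j]? = some (Sum.inr y)) with hs₂def
    by_cases hne : s₁.Nonempty
    · have hlt₁ : s₁.max' hne < i :=
        Finset.mem_range.1 (Finset.mem_filter.1 (Finset.max'_mem _ hne)).1
      have hne₂ : s₂.Nonempty := by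
        by_contra hne₂
        rw [dif_pos hne, dif_neg hne₂] at hpp
        simp only [Sum.inr.injEq] at hpp
        omega
      have hlt₂ : s₂.max' hne₂ < i :=
        Finset.mem_range.1 (Finset.mem_filter.1 (Finset.max'_mem _ hne₂)).1
      rw [dif_pos hne, dif_pos hne₂] at hpp
      simp only [Sum.inr.injEq] at hpp
      have hmax : s₁.max' hne = s₂.max' hne₂ := by omega
      have hk₁ : w₁[s₁.max' hne]? = some (Sum.inr x) :=
        (Finset.mem_filter.1 (Finset.max'_mem _ hne)).2
      have hk₂ : w₂[s₁.max' hne]? = some (Sum.inr y) := by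
        rw [hmax]; exact (Finset.mem_filter.1 (Finset.max'_mem _ hne₂)).2
      rw [hc₁', hc₂']
      by_cases hjk : j ≤ s₁.max' hne
      · have := IH (s₁.max' hne) hlt₁ (lt_trans hlt₁ hi) j hjk
        rw [hk₁, hk₂] at this
        exact this
      · push_neg at hjk
        constructor
        · intro hj'
          exact absurd (Finset.le_max' s₁ j
            (Finset.mem_filter.2 ⟨Finset.mem_range.2 hji, hj'⟩)) (not_le.2 hjk)
        · intro hj'
          refine absurd (Finset.le_max' s₂ j
            (Finset.mem_filter.2 ⟨Finset.mem_range.2 hji, hj'⟩)) (not_le.2 ?_)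
          omega
    · have hne₂ : ¬ s₂.Nonempty := by
        by_contra hne₂
        rw [dif_neg hne, dif_pos hne₂] at hpp
        have hlt₂ : s₂.max' hne₂ < i :=
          Finset.mem_range.1 (Finset.mem_filter.1 (Finset.max'_mem _ hne₂)).1
        simp only [Sum.inr.injEq] at hpp
        omega
      rw [hc₁', hc₂']
      constructor
      · intro hj'
        exact (hne ⟨j, Finset.mem_filter.2 ⟨Finset.mem_range.2 hji, hj'⟩⟩).elim
      · intro hj'
        exact (hne₂ ⟨j, Finset.mem_filter.2 ⟨Finset.mem_range.2 hji, hj'⟩⟩).elim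

end Aux

section A4
variable [DecidableEq σ] [DecidableEq π]

lemma pm_prevAt_inlX {w : List (σ ⊕ π)} {i : ℕ} {a : σ} (h : w[i]? = some (Sum.inl a)) :
    prevAt w i = Sum.inl a := by simp [prevAt, h]

lemma pm_prevAt_inrX {w : List (σ ⊕ π)} {i : ℕ} {x : π} (h : w[i]? = some (Sum.inr x)) :
    prevAt w i =
      (if hs : ((Finset.range i).filter (fun j => w[j]? = some (Sum.inr x))).Nonempty
        then Sum.inr (i - ((Finset.range i).filter (fun j => w[j]? = some (Sum.inr x))).max' hs)
        else Sum.inr 0) := by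
  simp [prevAt, h]

lemma pm_prevAt_none {w : List (σ ⊕ π)} {i : ℕ} (h : w[i]? = none) :
    prevAt w i = Sum.inr 0 := by simp [prevAt, h]

lemma pm_prevEncode_map {f : σ ⊕ π → σ ⊕ π} (hinj : Function.Injective f)
    (hfix : ∀ a : σ, f (Sum.inl a) = Sum.inl a) (w : List (σ ⊕ π)) :
    prevEncode (w.map f) = prevEncode w := by
  unfold prevEncode
  rw [List.length_map]
  apply List.map_congr_left
  intro i hi
  have hmap : ∀ j, (w.map f)[j]? = (w[j]?).map f := fun j => List.getElem?_map
  cases hc : w[i]? with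
  | none =>
    rw [pm_prevAt_none hc, pm_prevAt_none (by rw [hmap i, hc]; rfl)]
  | some c =>
    cases c with
    | inl a =>
      have hmi : (w.map f)[i]? = some (Sum.inl a) := by rw [hmap i, hc]; simp [hfix]
      rw [pm_prevAt_inlX hmi, pm_prevAt_inlX hc]
    | inr x =>
      obtain ⟨y, hy⟩ : ∃ y, f (Sum.inr x) = Sum.inr y := by
        cases hfc : f (Sum.inr x) with
        | inl a => exact absurd (hinj (hfc.trans (hfix a).symm)) (by simp)
        | inr y => exact ⟨y, rfl⟩
      have hmi : (w.map f)[i]? = some (Sum.inr y) := by rw [hmap i, hc]; simp [hy]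
      rw [pm_prevAt_inrX hmi, pm_prevAt_inrX hc]
      have hfilter : (Finset.range i).filter (fun j => (w.map f)[j]? = some (Sum.inr y)) =
          (Finset.range i).filter (fun j => w[j]? = some (Sum.inr x)) := by
        apply Finset.filter_congr
        intro j _
        rw [hmap j]
        constructor
        · intro hj
          cases hcj : w[j]? with
          | none => rw [hcj] at hj; simp at hj
          | some c =>
            rw [hcj] at hj
            simp only [Option.map_some] at hj
            have : f c = f (Sum.inr x) := by rw [hy]; exact Option.some_inj.1 hj
            exact congrArg some (hinj this)
        · intro hj; rw [hj]; simp [hy]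
      rw [hfilter]

lemma pm_mem_params {w : List (σ ⊕ π)} {x : π} :
    x ∈ (w.filterMap Sum.getRight?).toFinset ↔ ∃ i : ℕ, w[i]? = some (Sum.inr x) := by
  rw [List.mem_toFinset, List.mem_filterMap]
  constructor
  · rintro ⟨c, hc, hc2⟩
    cases c with
    | inl a => simp at hc2
    | inr y =>
      simp only [Sum.getRight?] at hc2
      obtain rfl : y = x := by simpa using hc2
      exact List.mem_iff_getElem?.1 hc
  · rintro ⟨i, hi⟩
    exact ⟨Sum.inr x, List.mem_of_getElem? hi, rfl⟩

end A4

lemma pm_extend_leftInverse [DecidableEq π] {A B : Finset π} (φ ψ : π → π)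
    (hφ : ∀ x ∈ A, φ x ∈ B) (hψφ : ∀ x ∈ A, ψ (φ x) = x)
    (χ : {v // v ∈ B \ A} ≃ {v // v ∈ A \ B}) :
    Function.LeftInverse
      (fun v => if hv : v ∈ B then ψ v else
        if hv' : v ∈ A \ B then ((χ.symm ⟨v, hv'⟩ : {v // v ∈ B \ A}) : π) else v)
      (fun v => if hv : v ∈ A then φ v else
        if hv' : v ∈ B \ A then ((χ ⟨v, hv'⟩ : {v // v ∈ A \ B}) : π) else v) := by
  intro v
  by_cases hv : v ∈ A
  · simp only [dif_pos hv]
    rw [dif_pos (hφ v hv)]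
    exact hψφ v hv
  · by_cases hv' : v ∈ B \ A
    · simp only [dif_neg hv, dif_pos hv']
      have h2 := (χ ⟨v, hv'⟩).2
      have hnB : ((χ ⟨v, hv'⟩ : {v // v ∈ A \ B}) : π) ∉ B := (Finset.mem_sdiff.1 h2).2
      rw [dif_neg hnB, dif_pos h2]
      have h3 : (⟨((χ ⟨v, hv'⟩ : {v // v ∈ A \ B}) : π), h2⟩ : {v // v ∈ A \ B}) = χ ⟨v, hv'⟩ :=
        Subtype.coe_eta _ _
      rw [h3, Equiv.symm_apply_apply]
    · have hvB : v ∉ B := fun hc => hv' (Finset.mem_sdiff.2 ⟨hc, hv⟩)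
      have hvAB : v ∉ A \ B := fun hc => hv (Finset.mem_sdiff.1 hc).1
      simp only [dif_neg hv, dif_neg hv', dif_neg hvB, dif_neg hvAB]


lemma pm_bound {α : Type*} {l : List α} {i : ℕ} {c : α} (h : l[i]? = some c) :
    i < l.length := by
  by_contra hcon
  rw [List.getElem?_eq_none (le_of_not_gt hcon)] at h
  exact nomatch h

section Aux3
variable [DecidableEq σ] [DecidableEq π]

open Classical in
noncomputable def pParamMap (w₁ w₂ : List (σ ⊕ π)) (x : π) : π :=
  if h : ∃ i, w₁[i]? = some (Sum.inr x) then
    match w₂[Nat.find h]? with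
    | some (Sum.inr y) => y
    | _ => x
  else x

lemma pm_pParamMap_correct {w₁ w₂ : List (σ ⊕ π)} (hlen : w₁.length = w₂.length)
    (h : prevEncode w₁ = prevEncode w₂) {i : ℕ} (hi : i < w₁.length) {x : π}
    (hxi : w₁[i]? = some (Sum.inr x)) :
    w₂[i]? = some (Sum.inr (pParamMap w₁ w₂ x)) := by
  classical
  have hex : ∃ i, w₁[i]? = some (Sum.inr x) := ⟨i, hxi⟩
  have hx₀ : w₁[Nat.find hex]? = some (Sum.inr x) := Nat.find_spec hex
  have hi₀lt : Nat.find hex < w₁.length := by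
    by_contra hcon
    rw [List.getElem?_eq_none (le_of_not_gt hcon)] at hx₀
    exact nomatch hx₀
  obtain ⟨y, hy⟩ := pm_param_pos hlen h hi₀lt hx₀
  have hpm : pParamMap w₁ w₂ x = y := by
    simp only [pParamMap, dif_pos hex, hy]
  rcases le_total (Nat.find hex) i with hle | hle
  · have := (pm_claimC hlen h i hi _ hle).1 (by rw [hx₀, hxi])
    rw [hpm, ← this, hy]
  · have := (pm_claimC hlen h _ hi₀lt i hle).1 (by rw [hx₀, hxi])
    rw [hpm, this, hy]


lemma pm_pParamMap_inv {w₁ w₂ : List (σ ⊕ π)} (hlen : w₁.length = w₂.length)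
    (h : prevEncode w₁ = prevEncode w₂) {x : π}
    (hex : ∃ i : ℕ, w₁[i]? = some (Sum.inr x)) :
    pParamMap w₂ w₁ (pParamMap w₁ w₂ x) = x := by
  obtain ⟨i, hxi⟩ := hex
  have hi := pm_bound hxi
  have hy := pm_pParamMap_correct hlen h hi hxi
  have h2 := pm_pParamMap_correct hlen.symm h.symm (hlen ▸ hi) hy
  rw [hxi] at h2
  exact (Sum.inr.inj (Option.some_inj.1 h2)).symm

end Aux3

/-- Two p-strings of the same length p-match iff their prev-encodings coincide. -/
theorem pmatch_iff_prevEncode_eq [DecidableEq σ] [DecidableEq π]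
    (w₁ w₂ : List (σ ⊕ π)) (hlen : w₁.length = w₂.length) :
    PMatch w₁ w₂ ↔ prevEncode w₁ = prevEncode w₂ := by
  constructor
  · rintro ⟨f, hbij, hfix, rfl⟩
    exact (pm_prevEncode_map hbij.injective hfix w₁).symm
  · intro h
    classical
    set A : Finset π := (w₁.filterMap Sum.getRight?).toFinset with hA
    set B : Finset π := (w₂.filterMap Sum.getRight?).toFinset with hB
    set φ : π → π := pParamMap w₁ w₂ with hφdef
    set ψ : π → π := pParamMap w₂ w₁ with hψdef
    have hφB : ∀ x ∈ A, φ x ∈ B := by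
      intro x hx
      obtain ⟨i, hi⟩ := pm_mem_params.1 hx
      exact pm_mem_params.2 ⟨i, pm_pParamMap_correct hlen h (pm_bound hi) hi⟩
    have hψA : ∀ y ∈ B, ψ y ∈ A := by
      intro y hy
      obtain ⟨i, hi⟩ := pm_mem_params.1 hy
      exact pm_mem_params.2 ⟨i, pm_pParamMap_correct hlen.symm h.symm (pm_bound hi) hi⟩
    have hψφ : ∀ x ∈ A, ψ (φ x) = x := fun x hx =>
      pm_pParamMap_inv hlen h (pm_mem_params.1 hx)
    have hφψ : ∀ y ∈ B, φ (ψ y) = y := fun y hy =>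
      pm_pParamMap_inv hlen.symm h.symm (pm_mem_params.1 hy)
    have hcard : A.card = B.card := by
      refine Finset.card_bij (fun x _ => φ x) hφB ?_ ?_
      · intro x hx x' hx' heq
        rw [← hψφ x hx, ← hψφ x' hx']
        exact congrArg ψ heq
      · intro y hy
        exact ⟨ψ y, hψA y hy, hφψ y hy⟩
    have hcard2 : Fintype.card {v // v ∈ B \ A} = Fintype.card {v // v ∈ A \ B} := by
      rw [Fintype.card_coe, Fintype.card_coe]
      exact Finset.card_sdiff_comm hcard.symm
    let χ : {v // v ∈ B \ A} ≃ {v // v ∈ A \ B} := Fintype.equivOfCardEq hcard2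
    have hGF := pm_extend_leftInverse φ ψ hφB hψφ χ
    have hFG := pm_extend_leftInverse ψ φ hψA hφψ χ.symm
    simp only [Equiv.symm_symm] at hFG
    let eπ : Equiv.Perm π :=
      ⟨fun v => if hv : v ∈ A then φ v else
          if hv' : v ∈ B \ A then ((χ ⟨v, hv'⟩ : {v // v ∈ A \ B}) : π) else v,
        fun v => if hv : v ∈ B then ψ v else
          if hv' : v ∈ A \ B then ((χ.symm ⟨v, hv'⟩ : {v // v ∈ B \ A}) : π) else v,
        hGF, hFG⟩
    let e : (σ ⊕ π) ≃ (σ ⊕ π) := Equiv.sumCongr (Equiv.refl σ) eπ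
    refine ⟨e, e.bijective, fun a => rfl, ?_⟩
    apply List.ext_getElem?
    intro i
    rw [List.getElem?_map]
    cases hc : w₁[i]? with
    | none =>
      have hle : w₁.length ≤ i := by
        by_contra hcon
        rw [List.getElem?_eq_getElem (lt_of_not_ge hcon)] at hc
        exact nomatch hc
      rw [List.getElem?_eq_none (hlen ▸ hle)]
      rfl
    | some c =>
      have hi : i < w₁.length := pm_bound hc
      cases c with
      | inl a =>
        rw [pm_const_pos hlen h hi hc]
        rfl
      | inr x =>
        have hx : x ∈ A := pm_mem_params.2 ⟨i, hc⟩
        rw [pm_pParamMap_correct hlen h hi hc]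
        simp only [Option.map_some]
        congr 1
        show Sum.inr (φ x) = e (Sum.inr x)
        simp only [e, eπ, Equiv.sumCongr_apply, Sum.map_inr, Equiv.coe_fn_mk, dif_pos hx]
end

section
/- For any p-string w and any indices 1 ≤ i ≤ j ≤ |w|, the 1-re-encoding of the substring ⟨w⟩[i:j] of the prev-encoding of w equals the prev-encoding of the substring w[i:j], i.e., ⟨⟨w⟩[i:j]⟩₁ = ⟨w[i:j]⟩. -/
open List

variable {σ π : Type*}

theorem reEncode_drop_take_prevEncode [DecidableEq σ] [DecidableEq π] (w : List (σ ⊕ π)) (d t : ℕ) :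
    reEncode 1 (((prevEncode w).drop d).take t) = prevEncode ((w.drop d).take t) := by
  have hpelen : (prevEncode w).length = w.length := by simp [prevEncode]
  have hulen : (((prevEncode w).drop d).take t).length = min t (w.length - d) := by
    simp [hpelen]
  have hwlen : ((w.drop d).take t).length = min t (w.length - d) := by simp
  apply List.ext_getElem?
  intro p
  by_cases hp : p < min t (w.length - d)
  · have hpt : p < t := by omega
    have hpl : d + p < w.length := by omega
    -- value of the inner list at p
    have hu : (((prevEncode w).drop d).take t)[p]? = some (prevAt w (d + p)) := by
      rw [List.getElem?_take, if_pos hpt, List.getElem?_drop]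
      simp [prevEncode, List.getElem?_map, List.getElem?_range, hpl]
    have hw' : ∀ q, q < t → ((w.drop d).take t)[q]? = w[d + q]? := by
      intro q hq
      rw [List.getElem?_take, if_pos hq, List.getElem?_drop]
    -- LHS
    have hL : (reEncode 1 (((prevEncode w).drop d).take t))[p]? =
        some (match prevAt w (d + p) with
          | Sum.inl a => Sum.inl a
          | Sum.inr m => if p + 2 ≤ m + 1 then Sum.inr (0:ℕ) else Sum.inr m) := by
      rw [reEncode]
      rw [List.getElem?_map]
      rw [List.getElem?_range (by omega)]
      simp only [Option.map_some]
      rw [hu]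
      rcases prevAt w (d + p) with a | m <;> rfl
    -- RHS
    have hR : (prevEncode ((w.drop d).take t))[p]? = some (prevAt ((w.drop d).take t) p) := by
      rw [prevEncode, List.getElem?_map, List.getElem?_range (by omega)]
      simp
    rw [hL, hR]
    have hget : w[d + p]? = some w[d + p] := List.getElem?_eq_getElem hpl
    rcases hx : w[d + p] with a | x
    · rw [prevAt, prevAt, hw' p hpt, hget, hx]
    · rw [prevAt, prevAt, hw' p hpt, hget, hx]
      dsimp only
      set s := (Finset.range (d + p)).filter (fun q => w[q]? = some (Sum.inr x)) with hs
      set s' := (Finset.range p).filter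
        (fun q => ((w.drop d).take t)[q]? = some (Sum.inr x)) with hs'
      have hs'eq : s' = (Finset.range p).filter (fun q => w[d + q]? = some (Sum.inr x)) := by
        apply Finset.filter_congr
        intro q hq
        rw [hw' q (by simp at hq; omega)]
      by_cases hne : s.Nonempty
      · rw [dif_pos hne]
        dsimp only
        have hMmem : s.max' hne ∈ s := s.max'_mem hne
        have hMlt : s.max' hne < d + p := by
          have := (Finset.mem_filter.mp hMmem).1
          simpa using this
        have hMub : ∀ q ∈ s, q ≤ s.max' hne := fun q hq => s.le_max' q hq
        by_cases hMd : d ≤ s.max' hne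
        · have hmem' : s.max' hne - d ∈ s' := by
            rw [hs'eq, Finset.mem_filter, Finset.mem_range]
            refine ⟨by omega, ?_⟩
            have h0 : d + (s.max' hne - d) = s.max' hne := by omega
            rw [h0]
            exact (Finset.mem_filter.mp hMmem).2
          have hne' : s'.Nonempty := ⟨s.max' hne - d, hmem'⟩
          rw [dif_pos hne']
          have hmax' : s'.max' hne' = s.max' hne - d := by
            apply _root_.le_antisymm
            · apply Finset.max'_le
              intro q hq
              rw [hs'eq, Finset.mem_filter, Finset.mem_range] at hq
              have hqs : d + q ∈ s := by
                rw [hs, Finset.mem_filter, Finset.mem_range]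
                exact ⟨by omega, hq.2⟩
              have := hMub _ hqs
              omega
            · exact Finset.le_max' _ _ hmem'
          rw [hmax', if_neg (by omega)]
          have h1 : d + p - s.max' hne = p - (s.max' hne - d) := by omega
          rw [h1]
        · rw [if_pos (by omega)]
          have hne' : ¬ s'.Nonempty := by
            rintro ⟨q, hq⟩
            rw [hs'eq, Finset.mem_filter, Finset.mem_range] at hq
            have hqs : d + q ∈ s := by
              rw [hs, Finset.mem_filter, Finset.mem_range]
              exact ⟨by omega, hq.2⟩
            have := hMub _ hqs
            omega
          rw [dif_neg hne']
      · rw [dif_neg hne]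
        dsimp only
        rw [if_neg (by omega)]
        have hne' : ¬ s'.Nonempty := by
          rintro ⟨q, hq⟩
          rw [hs'eq, Finset.mem_filter, Finset.mem_range] at hq
          exact hne ⟨d + q, by rw [hs, Finset.mem_filter, Finset.mem_range]; exact ⟨by omega, hq.2⟩⟩
        rw [dif_neg hne']
  · have h1 : (reEncode 1 (((prevEncode w).drop d).take t))[p]? = none := by
      apply List.getElem?_eq_none
      simp [reEncode, hulen]; omega
    have h2 : (prevEncode ((w.drop d).take t))[p]? = none := by
      apply List.getElem?_eq_none
      simp [prevEncode, hwlen]; omega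
    rw [h1, h2]

/-- Re-encoding a substring of the prev-encoding gives the prev-encoding of the
substring: `⟨⟨w⟩[i:j]⟩₁ = ⟨w[i:j]⟩` for `1 ≤ i ≤ j ≤ |w|`. -/
theorem reEncode_infix_prevEncode [DecidableEq σ] [DecidableEq π]
    (w : List (σ ⊕ π)) (i j : ℕ) (h1 : 1 ≤ i) (h2 : i ≤ j) (h3 : j ≤ w.length) :
    reEncode 1 (((prevEncode w).drop (i - 1)).take (j - i + 1)) =
      prevEncode ((w.drop (i - 1)).take (j - i + 1)) := by
  exact reEncode_drop_take_prevEncode w (i - 1) (j - i + 1)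
end

section
/- For any p-string w and any 0 ≤ m < |w|, applying the implicit suffix link operation m times to the prev-encoding of w yields the prev-encoding of the suffix of w starting at position m+1, i.e., sl^m(⟨w⟩) = ⟨w[m+1:]⟩. -/
/-!
Deleting the first symbol of `w` shifts every position down by one, so a parameter keeps its
distance to its previous occurrence unless that occurrence was the deleted first symbol; exactly
then the distance at 0-indexed position `i + 1` is `i + 1`, which the 1-re-encoding resets to `0`.
Thus `sl ⟨w⟩ = ⟨w[2:]⟩`, and the theorem follows by iterating.
-/

open List

variable {σ π : Type*}

namespace Finset

variable {p : ℕ → Prop} [DecidablePred p] {n : ℕ}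

lemma filter_range_succ_nonempty (h : ((range n).filter (fun j => p (j + 1))).Nonempty) :
    ((range (n + 1)).filter p).Nonempty := by
  obtain ⟨j, hj⟩ := h
  rw [mem_filter, mem_range] at hj
  exact ⟨j + 1, mem_filter.2 ⟨mem_range.2 (by omega), hj.2⟩⟩

lemma max'_filter_range_succ (h : ((range n).filter (fun j => p (j + 1))).Nonempty) :
    ((range (n + 1)).filter p).max' (filter_range_succ_nonempty h) =
      ((range n).filter (fun j => p (j + 1))).max' h + 1 := by
  refine le_antisymm (max'_le _ _ _ fun j hj => ?_) (le_max' _ _ ?_)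
  · rw [mem_filter, mem_range] at hj
    rcases j with _ | k
    · omega
    · exact Nat.succ_le_succ (le_max' _ k (mem_filter.2 ⟨mem_range.2 (by omega), hj.2⟩))
  · have hmax := mem_filter.1 (max'_mem _ h)
    exact mem_filter.2 ⟨mem_range.2 (by simpa using hmax.1), hmax.2⟩

lemma eq_zero_of_mem_filter_range_succ (h : ¬((range n).filter (fun j => p (j + 1))).Nonempty)
    {j : ℕ} (hj : j ∈ (range (n + 1)).filter p) : j = 0 := by
  rw [mem_filter, mem_range] at hj
  rcases j with _ | k
  · rfl
  · exact absurd ⟨k, mem_filter.2 ⟨mem_range.2 (by omega), hj.2⟩⟩ h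

end Finset

def reEncodeAt (k i : ℕ) : σ ⊕ ℕ → σ ⊕ ℕ
  | Sum.inl a => Sum.inl a
  | Sum.inr m => if i + 2 ≤ m + k then Sum.inr 0 else Sum.inr m

@[simp]
lemma length_reEncode (k : ℕ) (u : List (σ ⊕ ℕ)) : (reEncode k u).length = u.length := by
  simp [reEncode]

@[simp]
lemma getElem_reEncode (k : ℕ) (u : List (σ ⊕ ℕ)) (i : ℕ) (h : i < (reEncode k u).length) :
    (reEncode k u)[i] = reEncodeAt k i (u[i]'(by simpa using h)) := by
  have hi : i < u.length := by simpa using h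
  simp only [reEncode, getElem_map, getElem_range, getElem?_eq_getElem hi]
  cases u[i] <;> rfl

section PrevEncode

variable [DecidableEq σ] [DecidableEq π]

@[simp]
lemma length_prevEncode (w : List (σ ⊕ π)) : (prevEncode w).length = w.length := by
  simp [prevEncode]

@[simp]
lemma getElem_prevEncode (w : List (σ ⊕ π)) (i : ℕ) (h : i < (prevEncode w).length) :
    (prevEncode w)[i] = prevAt w i := by
  simp [prevEncode]

lemma reEncodeAt_one_prevAt_succ (w : List (σ ⊕ π)) (i : ℕ) :
    reEncodeAt 1 i (prevAt w (i + 1)) = prevAt w.tail i := by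
  have hshift : ∀ j, w.tail[j]? = w[j + 1]? := fun j => getElem?_tail
  rcases hv : w[i + 1]? with _ | v
  · simp [prevAt, reEncodeAt, hv, hshift]
  rcases v with a | x
  · simp [prevAt, reEncodeAt, hv, hshift]
  simp only [prevAt, hv, hshift]
  by_cases hne : ((Finset.range i).filter (fun j => w[j + 1]? = some (Sum.inr x))).Nonempty
  · rw [dif_pos (Finset.filter_range_succ_nonempty hne), dif_pos hne,
      Finset.max'_filter_range_succ hne]
    have hlt := Finset.mem_range.1 (Finset.mem_filter.1 (Finset.max'_mem _ hne)).1
    simp only [reEncodeAt]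
    rw [if_neg (by omega), Nat.add_sub_add_right]
  · -- the only earlier occurrence, if any, is the deleted first symbol
    rw [dif_neg hne]
    split_ifs with hs
    · rw [Finset.eq_zero_of_mem_filter_range_succ hne (Finset.max'_mem _ hs)]
      simp [reEncodeAt]
    · simp [reEncodeAt]

lemma sl_prevEncode (w : List (σ ⊕ π)) : sl (prevEncode w) = prevEncode w.tail := by
  refine ext_getElem (by simp [sl]) fun i _ _ => ?_
  simp only [sl, getElem_reEncode, getElem_tail, getElem_prevEncode]
  exact reEncodeAt_one_prevAt_succ w i

end PrevEncode

theorem sl_iterate_prevEncode_general [DecidableEq σ] [DecidableEq π]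
    (w : List (σ ⊕ π)) (m : ℕ) :
    sl^[m] (prevEncode w) = prevEncode (w.drop m) := by
  induction m with
  | zero => rfl
  | succ m ih => rw [Function.iterate_succ_apply', ih, sl_prevEncode, tail_drop]

/-- Iterating the implicit suffix link `m` times on `⟨w⟩` yields the
prev-encoding of the suffix of `w` starting at position `m + 1`. -/
theorem sl_iterate_prevEncode [DecidableEq σ] [DecidableEq π]
    (w : List (σ ⊕ π)) (m : ℕ) (hm : m < w.length) :
    sl^[m] (prevEncode w) = prevEncode (w.drop m) :=
  sl_iterate_prevEncode_general w m
end

section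
/- (Quadratic lower bound for the suffix-link closure of branching nodes) For every n ≥ 1, consider the p-string T_n = x_1 a_1 ⋯ x_n a_n x_1 a_1 ⋯ x_n a_n y_1 a_1 ⋯ y_n a_n z $ over disjoint alphabets, where x_1, …, x_n, y_1, …, y_n, z are pairwise distinct parameter symbols, a_1, …, a_n, $ are pairwise distinct constant symbols, and |T_n| = 6n + 2. For 1 ≤ i ≤ n, let w_i = 0 a_i 0 a_{i+1} ⋯ 0 a_n 0 a_1 ⋯ 0 a_{i−1} (a pv-string of length 2n). Then each w_i is a branching element of PrevSub(T_n) (indeed w_i·0 ∈ PrevSub(T_n) and w_i·(2n) ∈ PrevSub(T_n)), and the set { sl^j(w_i) : 1 ≤ i ≤ n, 0 ≤ j < 2n } is a subset of PrevSub(T_n) of cardinality exactly 2n². -/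
open List

variable {σ π : Type*}

/-- `u` is a leaf of `PrevSub T`: it belongs to `PrevSub T` and is not a
proper prefix of any element of `PrevSub T`. -/
def IsLeaf [DecidableEq σ] [DecidableEq π] (T : List (σ ⊕ π)) (u : List (σ ⊕ ℕ)) : Prop :=
  u ∈ PrevSub T ∧ ∀ v ∈ PrevSub T, u <+: v → u = v

/-- `u` is a branching element of `PrevSub T`: two distinct one-symbol
extensions of `u` belong to `PrevSub T`. -/
def Branching [DecidableEq σ] [DecidableEq π] (T : List (σ ⊕ π)) (u : List (σ ⊕ ℕ)) : Prop :=
  u ∈ PrevSub T ∧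
    ∃ a b : σ ⊕ ℕ, a ≠ b ∧ u ++ [a] ∈ PrevSub T ∧ u ++ [b] ∈ PrevSub T

/-- The text `T_n = x₁a₁⋯xₙaₙ x₁a₁⋯xₙaₙ y₁a₁⋯yₙaₙ z $` over `Σ = ℕ`
(constants `aᵢ = i` for `1 ≤ i ≤ n`, sentinel `$ = 0`) and `Π = ℕ`
(parameters `xᵢ = i`, `yᵢ = n + i`, `z = 0`), all pairwise distinct. -/
def Tpar (n : ℕ) : List (ℕ ⊕ ℕ) :=
  ((List.range n).flatMap fun i => [Sum.inr (i + 1), Sum.inl (i + 1)]) ++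
  ((List.range n).flatMap fun i => [Sum.inr (i + 1), Sum.inl (i + 1)]) ++
  ((List.range n).flatMap fun i => [Sum.inr (n + i + 1), Sum.inl (i + 1)]) ++
  [Sum.inr 0, Sum.inl 0]

/-- The pv-string `wᵢ = 0 aᵢ 0 aᵢ₊₁ ⋯ 0 aₙ 0 a₁ ⋯ 0 aᵢ₋₁` of length `2n`,
with the indices of the `a`'s taken cyclically in `{1, …, n}`. -/
def wpar (n i : ℕ) : List (ℕ ⊕ ℕ) :=
  (List.range n).flatMap fun j => [Sum.inr 0, Sum.inl ((i - 1 + j) % n + 1)]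

/-!
The strings `wᵢ·0`, `wᵢ·(2n)` and the suffixes of `wᵢ` are prev-encodings of explicit windows
of `T_n`. A window in which no parameter repeats encodes to itself with every parameter replaced
by `0`. The window `xᵢaᵢ⋯xₙaₙ y₁a₁⋯yᵢ₋₁aᵢ₋₁ yᵢ` and the suffixes of `xᵢaᵢ⋯xₙaₙ y₁a₁⋯yᵢ₋₁aᵢ₋₁`
are of this kind; they give `wᵢ·0` and every `slʲ(wᵢ)`, which is `wᵢ` with its first `j` symbols
dropped because all numbers in `wᵢ` are `0`. The window `xᵢaᵢ⋯xₙaₙ x₁a₁⋯xᵢ₋₁aᵢ₋₁ xᵢ` repeats only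
`xᵢ`, at distance `2n`, and gives `wᵢ·(2n)`. The `2n²` strings `slʲ(wᵢ)` are distinct: the length
determines `j`, and the last symbol `aᵢ₋₁` determines `i`.
-/

def eraseParams (w : List (σ ⊕ π)) : List (σ ⊕ ℕ) := w.map (Sum.map id fun _ => 0)

def params (w : List (σ ⊕ π)) : List π := w.filterMap Sum.getRight?

lemma mem_params {w : List (σ ⊕ π)} {x : π} : x ∈ params w ↔ Sum.inr x ∈ w := by
  simp [params]

@[simp] lemma eraseParams_append (w v : List (σ ⊕ π)) :
    eraseParams (w ++ v) = eraseParams w ++ eraseParams v :=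
  List.map_append ..

@[simp] lemma eraseParams_drop (w : List (σ ⊕ π)) (k : ℕ) :
    eraseParams (w.drop k) = (eraseParams w).drop k :=
  List.map_drop ..

@[simp] lemma eraseParams_take (w : List (σ ⊕ π)) (k : ℕ) :
    eraseParams (w.take k) = (eraseParams w).take k :=
  List.map_take ..

@[simp] lemma eraseParams_rotate (w : List (σ ⊕ π)) (k : ℕ) :
    eraseParams (w.rotate k) = (eraseParams w).rotate k :=
  List.map_rotate ..

section PrevEncode

variable [DecidableEq σ] [DecidableEq π]

lemma prevAt_append_of_lt (w v : List (σ ⊕ π)) {k : ℕ} (hk : k < w.length) :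
    prevAt (w ++ v) k = prevAt w k := by
  have hlt : ∀ j ≤ k, (w ++ v)[j]? = w[j]? := fun j hj =>
    List.getElem?_append_left (by omega)
  have hocc : ∀ x : π, ((Finset.range k).filter fun j => (w ++ v)[j]? = some (Sum.inr x)) =
      (Finset.range k).filter fun j => w[j]? = some (Sum.inr x) := fun x =>
    Finset.filter_congr fun j hj => by rw [hlt j (Finset.mem_range.mp hj).le]
  simp only [prevAt, hlt k le_rfl, hocc]

lemma prevEncode_concat (w : List (σ ⊕ π)) (c : σ ⊕ π) :
    prevEncode (w ++ [c]) = prevEncode w ++ [prevAt (w ++ [c]) w.length] := by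
  simp only [prevEncode, List.length_append, List.length_singleton, List.range_succ,
    List.map_append, List.map_singleton, List.append_cancel_right_eq]
  exact List.map_congr_left fun k hk => prevAt_append_of_lt w [c] (List.mem_range.mp hk)

lemma prevAt_concat_inl (w : List (σ ⊕ π)) (a : σ) :
    prevAt (w ++ [Sum.inl a]) w.length = Sum.inl a := by
  simp [prevAt]

lemma prevAt_concat_inr_of_not_mem {w : List (σ ⊕ π)} {x : π} (hx : Sum.inr x ∉ w) :
    prevAt (w ++ [Sum.inr x]) w.length = Sum.inr 0 := by
  simp only [prevAt, List.getElem?_concat_length]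
  rw [dif_neg]
  rintro ⟨j, hj⟩
  simp only [Finset.mem_filter, Finset.mem_range] at hj
  rw [List.getElem?_append_left hj.1] at hj
  exact hx (List.mem_of_getElem? hj.2)

lemma prevAt_cons_concat_inr {w : List (σ ⊕ π)} {x : π} (hx : Sum.inr x ∉ w) :
    prevAt (Sum.inr x :: w ++ [Sum.inr x]) (w.length + 1) = Sum.inr (w.length + 1) := by
  have hocc : ((Finset.range (w.length + 1)).filter
      fun j => (Sum.inr x :: w ++ [Sum.inr x])[j]? = some (Sum.inr x)) = {0} := by
    ext j
    rcases j with _ | j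
    · simp
    · simp only [Finset.mem_filter, Finset.mem_range, Finset.mem_singleton, List.cons_append,
        List.getElem?_cons_succ, Nat.add_one_ne_zero, iff_false, not_and]
      intro hj hmem
      rw [List.getElem?_append_left (by omega)] at hmem
      exact hx (List.mem_of_getElem? hmem)
  have hlast := List.getElem?_concat_length (l := Sum.inr x :: w) (a := Sum.inr x)
  simp only [List.length_cons] at hlast
  rw [prevAt, hlast]
  simp only [hocc, Finset.singleton_nonempty, dif_pos, Finset.max'_singleton, Nat.sub_zero]

lemma prevEncode_of_nodup_params {w : List (σ ⊕ π)} (h : (params w).Nodup) :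
    prevEncode w = eraseParams w := by
  induction w using List.reverseRecOn with
  | nil => rfl
  | append_singleton w c ih =>
    rw [params, List.filterMap_append, List.nodup_append] at h
    rw [prevEncode_concat, ih h.1]
    simp only [eraseParams, List.map_append, List.map_singleton]
    congr 2
    rcases c with a | x
    · exact prevAt_concat_inl w a
    · refine prevAt_concat_inr_of_not_mem fun hx => ?_
      exact h.2.2 x (mem_params.mpr hx) x (by simp) rfl

lemma prevEncode_cons_concat_of_nodup_params {w : List (σ ⊕ π)} {x : π}
    (h : (params (Sum.inr x :: w)).Nodup) :
    prevEncode (Sum.inr x :: w ++ [Sum.inr x]) =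
      eraseParams (Sum.inr x :: w) ++ [Sum.inr (w.length + 1)] := by
  have hx : Sum.inr x ∉ w := fun hx => by
    simp only [params, List.filterMap_cons, Sum.getRight?_inr, List.nodup_cons] at h
    exact h.1 (mem_params.mpr hx)
  rw [prevEncode_concat, prevEncode_of_nodup_params h, List.length_cons,
    prevAt_cons_concat_inr hx]

lemma eraseParams_mem_prevSub {w T : List (σ ⊕ π)} (hw : w <:+: T) (h : (params w).Nodup) :
    eraseParams w ∈ PrevSub T :=
  ⟨w, hw, (prevEncode_of_nodup_params h).symm⟩

end PrevEncode

lemma reEncode_of_forall_inr_eq_zero (k : ℕ) {u : List (σ ⊕ ℕ)}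
    (hu : ∀ m, Sum.inr m ∈ u → m = 0) : reEncode k u = u := by
  refine List.ext_getElem (by simp [reEncode]) fun i hi _ => ?_
  have hi' : i < u.length := by simpa [reEncode] using hi
  simp only [reEncode, List.getElem_map, List.getElem_range, List.getElem?_eq_getElem hi']
  rcases hc : u[i] with a | m
  · rfl
  · obtain rfl := hu m (hc ▸ List.getElem_mem _)
    simp

lemma sl_iterate_of_forall_inr_eq_zero (j : ℕ) {u : List (σ ⊕ ℕ)}
    (hu : ∀ m, Sum.inr m ∈ u → m = 0) : sl^[j] u = u.drop j := by
  induction j generalizing u with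
  | zero => rfl
  | succ j ih =>
    have htail : ∀ m, Sum.inr m ∈ u.tail → m = 0 := fun m hm => hu m (List.mem_of_mem_tail hm)
    rw [Function.iterate_succ_apply, sl, reEncode_of_forall_inr_eq_zero 1 htail,
      ih htail, List.drop_tail, Nat.add_comm]

lemma drop_append_take_infix {α : Type*} (l l' : List α) (k m : ℕ) :
    l.drop k ++ l'.take m <:+: l ++ l' :=
  ⟨l.take k, l'.drop m, by
    rw [List.append_assoc, List.append_assoc, List.take_append_drop, ← List.append_assoc,
      List.take_append_drop]⟩

lemma flatMap_range_pair {α : Type*} (f g : ℕ → α) (n : ℕ) :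
    (List.range n).flatMap (fun j => [f j, g j]) =
      (List.range (2 * n)).map fun m => if m % 2 = 0 then f (m / 2) else g (m / 2) := by
  induction n with
  | zero => rfl
  | succ n ih =>
    have h0 : 2 * n % 2 = 0 ∧ 2 * n / 2 = n := by omega
    have h1 : (2 * n + 1) % 2 = 1 ∧ (2 * n + 1) / 2 = n := by omega
    rw [List.range_succ, List.flatMap_append, ih, show 2 * (n + 1) = 2 * n + 1 + 1 by ring,
      List.range_succ, List.range_succ]
    simp [h0, h1]

def xBlock (n : ℕ) : List (ℕ ⊕ ℕ) :=
  (List.range n).flatMap fun i => [Sum.inr (i + 1), Sum.inl (i + 1)]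

def yBlock (n : ℕ) : List (ℕ ⊕ ℕ) :=
  (List.range n).flatMap fun i => [Sum.inr (n + i + 1), Sum.inl (i + 1)]

lemma Tpar_eq (n : ℕ) : Tpar n = xBlock n ++ xBlock n ++ yBlock n ++ [Sum.inr 0, Sum.inl 0] :=
  rfl

lemma length_xBlock (n : ℕ) : (xBlock n).length = 2 * n := by
  simp [xBlock, flatMap_range_pair]

lemma length_yBlock (n : ℕ) : (yBlock n).length = 2 * n := by
  simp [yBlock, flatMap_range_pair]

lemma getElem_xBlock_two_mul {n i : ℕ} (h : 2 * i < (xBlock n).length) :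
    (xBlock n)[2 * i] = Sum.inr (i + 1) := by
  simp [xBlock, flatMap_range_pair]

lemma wpar_eq_map (n i : ℕ) : wpar n i = (List.range (2 * n)).map fun m =>
    if m % 2 = 0 then Sum.inr 0 else Sum.inl ((i - 1 + m / 2) % n + 1) :=
  flatMap_range_pair _ _ n

lemma eraseParams_xBlock (n : ℕ) : eraseParams (xBlock n) = wpar n 1 := by
  simp only [eraseParams, xBlock, wpar, List.map_flatMap]
  refine List.flatMap_congr fun i hi => ?_
  simp [Nat.mod_eq_of_lt (List.mem_range.mp hi)]

lemma eraseParams_yBlock (n : ℕ) : eraseParams (yBlock n) = wpar n 1 := by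
  simp only [eraseParams, yBlock, wpar, List.map_flatMap]
  refine List.flatMap_congr fun i hi => ?_
  simp [Nat.mod_eq_of_lt (List.mem_range.mp hi)]

lemma nodup_params_xBlock_append_yBlock (n : ℕ) : (params (xBlock n ++ yBlock n)).Nodup := by
  have hx : params (xBlock n) = (List.range n).map (· + 1) := by
    simp [params, xBlock, List.filterMap_flatMap, List.filterMap_cons, List.map_eq_flatMap]
  have hy : params (yBlock n) = (List.range n).map (n + · + 1) := by
    simp [params, yBlock, List.filterMap_flatMap, List.filterMap_cons, List.map_eq_flatMap]
  rw [params, List.filterMap_append, ← params, ← params, hx, hy, List.nodup_append]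
  refine ⟨List.nodup_range.map (add_left_injective 1), List.nodup_range.map ?_, ?_⟩
  · intro a b hab; simpa using hab
  · simp only [List.mem_map, List.mem_range]
    rintro _ ⟨a, ha, rfl⟩ _ ⟨b, -, rfl⟩
    omega

lemma wpar_eq_rotate (n i : ℕ) : wpar n (i + 1) = (wpar n 1).rotate (2 * i) := by
  refine List.ext_getElem (by simp [wpar_eq_map]) fun m hm _ => ?_
  have hm' : m < 2 * n := by simpa [wpar_eq_map] using hm
  have hdiv : (m + 2 * i) % (2 * n) / 2 % n = (i + m / 2) % n := by
    rw [Nat.mod_mul_right_div_self, Nat.mod_mod, show (m + 2 * i) / 2 = i + m / 2 by omega]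
  simp [wpar_eq_map, List.getElem_rotate, hdiv]

lemma forall_inr_mem_wpar {n i m : ℕ} (h : Sum.inr m ∈ wpar n i) : m = 0 := by
  simp only [wpar, List.mem_flatMap, List.mem_cons, Sum.inr.injEq, reduceCtorEq,
    List.not_mem_nil, or_false] at h
  obtain ⟨_, _, rfl⟩ := h
  rfl

lemma xBlock_append_yBlock_infix (n : ℕ) : xBlock n ++ yBlock n <:+: Tpar n :=
  ⟨xBlock n, [Sum.inr 0, Sum.inl 0], by simp [Tpar_eq]⟩

lemma xBlock_append_xBlock_infix (n : ℕ) : xBlock n ++ xBlock n <:+: Tpar n :=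
  ⟨[], yBlock n ++ [Sum.inr 0, Sum.inl 0], by simp [Tpar_eq]⟩

lemma nodup_params_of_sublist_xBlock_append_yBlock {w : List (ℕ ⊕ ℕ)} {n : ℕ}
    (h : w <+ xBlock n ++ yBlock n) : (params w).Nodup :=
  (nodup_params_xBlock_append_yBlock n).sublist (h.filterMap _)

lemma eraseParams_drop_xBlock_append_take_yBlock {n i : ℕ} (hi : i ≤ n) :
    eraseParams ((xBlock n).drop (2 * i) ++ (yBlock n).take (2 * i)) = wpar n (i + 1) := by
  rw [eraseParams_append, eraseParams_drop, eraseParams_take, eraseParams_xBlock,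
    eraseParams_yBlock, wpar_eq_rotate n i, List.rotate_eq_drop_append_take]
  simpa [wpar_eq_map] using hi

lemma drop_wpar_mem_prevSub {n i : ℕ} (hi : i ≤ n) (j : ℕ) :
    (wpar n (i + 1)).drop j ∈ PrevSub (Tpar n) := by
  rw [← eraseParams_drop_xBlock_append_take_yBlock hi, ← eraseParams_drop]
  exact eraseParams_mem_prevSub
    ((List.drop_suffix _ _).isInfix.trans
      ((drop_append_take_infix _ _ _ _).trans (xBlock_append_yBlock_infix n)))
    (nodup_params_of_sublist_xBlock_append_yBlock
      ((List.drop_sublist _ _).trans ((List.drop_sublist _ _).append (List.take_sublist _ _))))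

lemma wpar_append_zero_mem_prevSub {n i : ℕ} (hi : i < n) :
    wpar n (i + 1) ++ [Sum.inr 0] ∈ PrevSub (Tpar n) := by
  have hy : (yBlock n).take (2 * i + 1) = (yBlock n).take (2 * i) ++ [Sum.inr (n + i + 1)] := by
    rw [List.take_add_one]
    simp [yBlock, flatMap_range_pair, List.getElem?_range (show 2 * i < 2 * n by omega)]
  have hw := eraseParams_mem_prevSub
    ((drop_append_take_infix (xBlock n) (yBlock n) (2 * i) (2 * i + 1)).trans
      (xBlock_append_yBlock_infix n))
    (nodup_params_of_sublist_xBlock_append_yBlock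
      ((List.drop_sublist _ _).append (List.take_sublist _ _)))
  rwa [hy, ← List.append_assoc, eraseParams_append,
    eraseParams_drop_xBlock_append_take_yBlock hi.le] at hw

lemma wpar_append_two_mul_mem_prevSub {n i : ℕ} (hi : i < n) :
    wpar n (i + 1) ++ [Sum.inr (2 * n)] ∈ PrevSub (Tpar n) := by
  have hlen : 2 * i < (xBlock n).length := by rw [length_xBlock]; omega
  have hrot : (xBlock n).rotate (2 * i) =
      Sum.inr (i + 1) :: ((xBlock n).drop (2 * i + 1) ++ (xBlock n).take (2 * i)) := by
    rw [List.rotate_eq_drop_append_take hlen.le, List.drop_eq_getElem_cons hlen,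
      getElem_xBlock_two_mul, List.cons_append]
  have hwin : (xBlock n).drop (2 * i) ++ (xBlock n).take (2 * i + 1) =
      Sum.inr (i + 1) :: ((xBlock n).drop (2 * i + 1) ++ (xBlock n).take (2 * i)) ++
        [Sum.inr (i + 1)] := by
    rw [← hrot, List.rotate_eq_drop_append_take hlen.le, List.take_add_one,
      List.getElem?_eq_getElem hlen, getElem_xBlock_two_mul, List.append_assoc]
    rfl
  have hnodup : (params ((xBlock n).rotate (2 * i))).Nodup :=
    ((List.rotate_perm _ _).filterMap _).nodup_iff.mpr
      (nodup_params_of_sublist_xBlock_append_yBlock (List.sublist_append_left _ _))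
  have hrest : ((xBlock n).drop (2 * i + 1) ++ (xBlock n).take (2 * i)).length + 1 = 2 * n := by
    rw [← List.length_cons, ← hrot, List.length_rotate, length_xBlock]
  refine ⟨_, (drop_append_take_infix _ _ (2 * i) (2 * i + 1)).trans
    (xBlock_append_xBlock_infix n), ?_⟩
  rw [hwin, prevEncode_cons_concat_of_nodup_params (hrot ▸ hnodup), ← hrot, eraseParams_rotate,
    eraseParams_xBlock, ← wpar_eq_rotate, hrest]

lemma drop_wpar_injOn (n : ℕ) :
    Set.InjOn (fun p : ℕ × ℕ => (wpar n p.1).drop p.2) (Set.Icc 1 n ×ˢ Set.Iio (2 * n)) := by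
  rintro ⟨i, j⟩ ⟨⟨hi, hin⟩, hj⟩ ⟨i', j'⟩ ⟨⟨hi', hin'⟩, hj'⟩ h
  simp only [Set.mem_Iio] at hj hj' h
  have hjj : j = j' := by
    have := congrArg List.length h
    simp [wpar_eq_map] at this
    omega
  subst hjj
  have hlast := congrArg List.getLast? h
  have hodd : (2 * n - 1) % 2 = 1 ∧ (2 * n - 1) / 2 = n - 1 := by omega
  simp [List.getLast?_drop, wpar_eq_map, List.getLast?_range, hj.not_ge, hodd,
    show n ≠ 0 by omega] at hlast
  have hmod : (i - 1) % n = (i' - 1) % n := Nat.ModEq.add_right_cancel' (n - 1) hlast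
  rw [Nat.mod_eq_of_lt (by omega), Nat.mod_eq_of_lt (by omega)] at hmod
  simp only [Prod.mk.injEq, and_true]
  omega

theorem suffix_link_closure_quadratic_general (n : ℕ) :
    (Tpar n).length = 6 * n + 2 ∧
    (∀ i, 1 ≤ i → i ≤ n →
      wpar n i ++ [Sum.inr 0] ∈ PrevSub (Tpar n) ∧
      wpar n i ++ [Sum.inr (2 * n)] ∈ PrevSub (Tpar n) ∧
      Branching (Tpar n) (wpar n i)) ∧
    {u : List (ℕ ⊕ ℕ) | ∃ i j, 1 ≤ i ∧ i ≤ n ∧ j < 2 * n ∧ u = sl^[j] (wpar n i)} ⊆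
      PrevSub (Tpar n) ∧
    {u : List (ℕ ⊕ ℕ) | ∃ i j, 1 ≤ i ∧ i ≤ n ∧ j < 2 * n ∧ u = sl^[j] (wpar n i)}.ncard =
      2 * n ^ 2 := by
  have hsl (i j : ℕ) : sl^[j] (wpar n i) = (wpar n i).drop j :=
    sl_iterate_of_forall_inr_eq_zero j fun _ => forall_inr_mem_wpar
  have hclosure : {u : List (ℕ ⊕ ℕ) | ∃ i j, 1 ≤ i ∧ i ≤ n ∧ j < 2 * n ∧ u = sl^[j] (wpar n i)} =
      (Finset.Icc 1 n ×ˢ Finset.range (2 * n)).image fun p => (wpar n p.1).drop p.2 := by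
    ext u
    simp [hsl, eq_comm, and_assoc]
  refine ⟨by simp [Tpar_eq, length_xBlock, length_yBlock]; ring, fun i hi hin => ?_, ?_, ?_⟩
  · obtain ⟨i, rfl⟩ := Nat.exists_eq_add_of_le' hi
    have h0 := wpar_append_zero_mem_prevSub (show i < n by omega)
    have h2n := wpar_append_two_mul_mem_prevSub (show i < n by omega)
    exact ⟨h0, h2n, drop_wpar_mem_prevSub (by omega) 0,
      _, _, Sum.inr_injective.ne (by omega), h0, h2n⟩
  · rintro u ⟨i, j, hi, hin, -, rfl⟩
    obtain ⟨i, rfl⟩ := Nat.exists_eq_add_of_le' hi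
    exact hsl _ j ▸ drop_wpar_mem_prevSub (by omega) j
  · rw [hclosure, Set.ncard_coe_finset, Finset.card_image_of_injOn, Finset.card_product,
      Nat.card_Icc, Nat.add_sub_cancel, Finset.card_range]
    · ring
    · simpa using drop_wpar_injOn n

/-- For every `n ≥ 1`: `|T_n| = 6n + 2`; each `wᵢ` (`1 ≤ i ≤ n`) is a branching
element of `PrevSub (T_n)`, witnessed by `wᵢ·0` and `wᵢ·(2n)`; and the implicit
suffix-link closure `{ slʲ(wᵢ) : 1 ≤ i ≤ n, 0 ≤ j < 2n }` is a subset of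
`PrevSub (T_n)` of cardinality exactly `2n²`. -/
theorem suffix_link_closure_quadratic (n : ℕ) (hn : 1 ≤ n) :
    (Tpar n).length = 6 * n + 2 ∧
    (∀ i, 1 ≤ i → i ≤ n →
      wpar n i ++ [Sum.inr 0] ∈ PrevSub (Tpar n) ∧
      wpar n i ++ [Sum.inr (2 * n)] ∈ PrevSub (Tpar n) ∧
      Branching (Tpar n) (wpar n i)) ∧
    {u : List (ℕ ⊕ ℕ) | ∃ i j, 1 ≤ i ∧ i ≤ n ∧ j < 2 * n ∧ u = sl^[j] (wpar n i)} ⊆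
      PrevSub (Tpar n) ∧
    {u : List (ℕ ⊕ ℕ) | ∃ i j, 1 ≤ i ∧ i ≤ n ∧ j < 2 * n ∧ u = sl^[j] (wpar n i)}.ncard =
      2 * n ^ 2 :=
  suffix_link_closure_quadratic_general n
end
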